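/- Assume g satisfies conditions (A1)–(A3) on (a,b), let F be the distribution function with density p(y) = c₁ e^{−G(y)} on (a,b), and for z ∈ (a,b) let f_z be the Stein solution defined by f_z(w) = F(w)(1 − F(z))/p(w) for w ≤ z and f_z(w) = F(z)(1 − F(w))/p(w) for w > z. Then F(z) − 1 ≤ g(w) f_z(w) ≤ F(z) for all w ∈ (a,b); in particular |g(w) f_z(w)| ≤ 1 for all w ∈ (a,b). -/

import Mathlib

open MeasureTheory Filter Set

/-- The open interval `(a, b) ⊆ ℝ` determined by extended-real endpoints. -/
def strip (a b : EReal) : Set ℝ := {x : ℝ | a < (x : EReal) ∧ (x : EReal) < b}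

/-- The density `p(y) = c₁ e^{-G(y)}`, `G(y) = ∫_{w₀}^y g`. -/
noncomputable def steinPdf (g : ℝ → ℝ) (w₀ c₁ : ℝ) (y : ℝ) : ℝ :=
  c₁ * Real.exp (-(∫ t in w₀..y, g t))

/-- The distribution function `F` with density `p` on `(a, b)`. -/
noncomputable def steinCDF (g : ℝ → ℝ) (a b : EReal) (w₀ c₁ : ℝ) (w : ℝ) : ℝ :=
  ∫ y in strip a b ∩ Set.Iic w, steinPdf g w₀ c₁ y

/-- The Stein solution `f_z`: `f_z(w) = F(w)(1-F(z))/p(w)` for `w ≤ z`, and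
`f_z(w) = F(z)(1-F(w))/p(w)` for `w > z`. -/
noncomputable def steinSol (g : ℝ → ℝ) (a b : EReal) (w₀ c₁ : ℝ) (z w : ℝ) : ℝ :=
  if w ≤ z then steinCDF g a b w₀ c₁ w * (1 - steinCDF g a b w₀ c₁ z) / steinPdf g w₀ c₁ w
  else steinCDF g a b w₀ c₁ z * (1 - steinCDF g a b w₀ c₁ w) / steinPdf g w₀ c₁ w

/-!
Since `p' = -g p` on `(a, b)`, integrating `g p` over `(c, w]` gives `p(c) - p(w) ≥ -p(w)`, and
because `g` is non-decreasing this integral is at most `g(w) ∫_c^w p`. Letting `c ↓ a` yields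
`g(w) F(w) ≥ -p(w)`, and symmetrically `g(w) (1 - F(w)) ≤ p(w)`. On each branch of `f_z` the two
bounds follow from these tail estimates by elementary algebra, using that `F` is monotone with
values in `[0, 1]`.
-/

open Topology

variable {a b : EReal} {g : ℝ → ℝ} {w₀ c₁ : ℝ}

lemma isOpen_strip : IsOpen (strip a b) :=
  isOpen_Ioo.preimage continuous_coe_real_ereal

lemma ordConnected_strip : (strip a b).OrdConnected :=
  ordConnected_Ioo.preimage_mono EReal.coe_strictMono.monotone

lemma exists_tendsto_setIntegral_Ioc_left {f : ℝ → ℝ} (hf : IntegrableOn f (strip a b)) {w : ℝ}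
    (hw : w ∈ strip a b) :
    ∃ c : ℕ → ℝ, (∀ n, c n ∈ strip a b ∧ c n ≤ w) ∧
      Tendsto (fun n => ∫ y in Ioc (c n) w, f y) atTop (𝓝 (∫ y in strip a b ∩ Iic w, f y)) := by
  obtain ⟨u, hu_anti, hu_mem, hu_lim⟩ := exists_seq_strictAnti_tendsto' hw.1
  have hu : ∀ n, ((u n).toReal : EReal) = u n := fun n =>
    EReal.coe_toReal ((hu_mem n).2.trans (EReal.coe_lt_top w)).ne (hu_mem n).1.ne_bot
  have hc : ∀ n, (u n).toReal ∈ strip a b ∧ (u n).toReal ≤ w := fun n => by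
    refine ⟨⟨?_, ?_⟩, EReal.coe_le_coe_iff.1 ?_⟩ <;> rw [hu]
    · exact (hu_mem n).1
    · exact (hu_mem n).2.trans hw.2
    · exact (hu_mem n).2.le
  have hmono : Monotone fun n => Ioc (u n).toReal w := fun m n hmn =>
    Ioc_subset_Ioc_left (by rw [← EReal.coe_le_coe_iff, hu, hu]; exact hu_anti.antitone hmn)
  have hunion : ⋃ n, Ioc (u n).toReal w = strip a b ∩ Iic w := by
    ext x
    simp only [mem_iUnion, mem_Ioc, mem_inter_iff, mem_Iic]
    constructor
    · rintro ⟨n, hnx, hxw⟩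
      exact ⟨ordConnected_strip.out (hc n).1 hw ⟨hnx.le, hxw⟩, hxw⟩
    · rintro ⟨hx, hxw⟩
      obtain ⟨n, hn⟩ := (hu_lim.eventually (gt_mem_nhds hx.1)).exists
      exact ⟨n, by rwa [← hu, EReal.coe_lt_coe_iff] at hn, hxw⟩
  refine ⟨fun n => (u n).toReal, hc, ?_⟩
  rw [← hunion]
  exact tendsto_setIntegral_of_monotone (fun _ => measurableSet_Ioc) hmono
    (hunion ▸ hf.mono_set inter_subset_left)

lemma exists_tendsto_setIntegral_Ioc_right {f : ℝ → ℝ} (hf : IntegrableOn f (strip a b)) {w : ℝ}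
    (hw : w ∈ strip a b) :
    ∃ d : ℕ → ℝ, (∀ n, d n ∈ strip a b ∧ w ≤ d n) ∧
      Tendsto (fun n => ∫ y in Ioc w (d n), f y) atTop (𝓝 (∫ y in strip a b ∩ Ioi w, f y)) := by
  obtain ⟨u, hu_mono, hu_mem, hu_lim⟩ := exists_seq_strictMono_tendsto' hw.2
  have hu : ∀ n, ((u n).toReal : EReal) = u n := fun n =>
    EReal.coe_toReal (hu_mem n).2.ne_top ((EReal.bot_lt_coe w).trans (hu_mem n).1).ne'
  have hd : ∀ n, (u n).toReal ∈ strip a b ∧ w ≤ (u n).toReal := fun n => by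
    refine ⟨⟨?_, ?_⟩, EReal.coe_le_coe_iff.1 ?_⟩ <;> rw [hu]
    · exact hw.1.trans (hu_mem n).1
    · exact (hu_mem n).2
    · exact (hu_mem n).1.le
  have hmono : Monotone fun n => Ioc w (u n).toReal := fun m n hmn =>
    Ioc_subset_Ioc_right (by rw [← EReal.coe_le_coe_iff, hu, hu]; exact hu_mono.monotone hmn)
  have hunion : ⋃ n, Ioc w (u n).toReal = strip a b ∩ Ioi w := by
    ext x
    simp only [mem_iUnion, mem_Ioc, mem_inter_iff, mem_Ioi]
    constructor
    · rintro ⟨n, hwx, hxn⟩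
      exact ⟨ordConnected_strip.out hw (hd n).1 ⟨hwx.le, hxn⟩, hwx⟩
    · rintro ⟨hx, hwx⟩
      obtain ⟨n, hn⟩ := (hu_lim.eventually (lt_mem_nhds hx.2)).exists
      exact ⟨n, hwx, by rw [← hu, EReal.coe_lt_coe_iff] at hn; exact hn.le⟩
  refine ⟨fun n => (u n).toReal, hd, ?_⟩
  rw [← hunion]
  exact tendsto_setIntegral_of_monotone (fun _ => measurableSet_Ioc) hmono
    (hunion ▸ hf.mono_set inter_subset_left)

lemma steinPdf_nonneg (hc₁ : 0 ≤ c₁) (y : ℝ) : 0 ≤ steinPdf g w₀ c₁ y :=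
  mul_nonneg hc₁ (Real.exp_pos _).le

lemma steinPdf_pos (hc₁ : 0 < c₁) (y : ℝ) : 0 < steinPdf g w₀ c₁ y :=
  mul_pos hc₁ (Real.exp_pos _)

lemma hasDerivAt_steinPdf (hg : ContinuousOn g (strip a b)) (hw₀ : w₀ ∈ strip a b) {y : ℝ}
    (hy : y ∈ strip a b) :
    HasDerivAt (steinPdf g w₀ c₁) (-(g y * steinPdf g w₀ c₁ y)) y := by
  have hG : HasDerivAt (fun u => ∫ t in w₀..u, g t) (g y) y :=
    intervalIntegral.integral_hasDerivAt_right
      (hg.mono (ordConnected_strip.uIcc_subset hw₀ hy)).intervalIntegrable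
      (hg.stronglyMeasurableAtFilter isOpen_strip y hy)
      (hg.continuousAt (isOpen_strip.mem_nhds hy))
  rw [show -(g y * steinPdf g w₀ c₁ y) = c₁ * (Real.exp (-∫ t in w₀..y, g t) * -g y) by
    rw [steinPdf]; ring]
  exact hG.neg.exp.const_mul c₁

lemma continuousOn_steinPdf (hg : ContinuousOn g (strip a b)) (hw₀ : w₀ ∈ strip a b) :
    ContinuousOn (steinPdf g w₀ c₁) (strip a b) :=
  fun _ hy => (hasDerivAt_steinPdf hg hw₀ hy).continuousAt.continuousWithinAt

lemma integral_mul_steinPdf (hg : ContinuousOn g (strip a b)) (hw₀ : w₀ ∈ strip a b) {u v : ℝ}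
    (hu : u ∈ strip a b) (hv : v ∈ strip a b) :
    ∫ t in u..v, g t * steinPdf g w₀ c₁ t = steinPdf g w₀ c₁ u - steinPdf g w₀ c₁ v := by
  have hderiv : ∀ t ∈ uIcc u v, HasDerivAt (steinPdf g w₀ c₁) (-(g t * steinPdf g w₀ c₁ t)) t :=
    fun t ht => hasDerivAt_steinPdf hg hw₀ (ordConnected_strip.uIcc_subset hu hv ht)
  have hcont : ContinuousOn (fun t => g t * steinPdf g w₀ c₁ t) (uIcc u v) :=
    (hg.mul (continuousOn_steinPdf hg hw₀)).mono (ordConnected_strip.uIcc_subset hu hv)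
  rw [← neg_sub, ← intervalIntegral.integral_eq_sub_of_hasDerivAt hderiv
    hcont.intervalIntegrable.neg, intervalIntegral.integral_neg, neg_neg]

lemma integrableOn_Ioc_steinPdf (hg : ContinuousOn g (strip a b)) (hw₀ : w₀ ∈ strip a b)
    {k : ℝ → ℝ} (hk : ContinuousOn k (strip a b)) {u v : ℝ} (hu : u ∈ strip a b)
    (hv : v ∈ strip a b) :
    IntegrableOn (fun y => k y * steinPdf g w₀ c₁ y) (Ioc u v) :=
  ((hk.mul (continuousOn_steinPdf hg hw₀)).mono
    (ordConnected_strip.out hu hv)).integrableOn_Icc.mono_set Ioc_subset_Icc_self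

lemma neg_steinPdf_le_mul_integral_Ioc (hc₁ : 0 ≤ c₁) (hg : ContinuousOn g (strip a b))
    (hg_mono : MonotoneOn g (strip a b)) (hw₀ : w₀ ∈ strip a b) {c w : ℝ}
    (hc : c ∈ strip a b) (hw : w ∈ strip a b) (hcw : c ≤ w) :
    -steinPdf g w₀ c₁ w ≤ g w * ∫ y in Ioc c w, steinPdf g w₀ c₁ y := by
  calc -steinPdf g w₀ c₁ w
      ≤ steinPdf g w₀ c₁ c - steinPdf g w₀ c₁ w :=
      (neg_eq_zero_sub _).trans_le (sub_le_sub_right (steinPdf_nonneg hc₁ c) _)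
    _ = ∫ y in Ioc c w, g y * steinPdf g w₀ c₁ y := by
      rw [← integral_mul_steinPdf hg hw₀ hc hw, intervalIntegral.integral_of_le hcw]
    _ ≤ ∫ y in Ioc c w, g w * steinPdf g w₀ c₁ y :=
      setIntegral_mono_on (integrableOn_Ioc_steinPdf hg hw₀ hg hc hw)
        (integrableOn_Ioc_steinPdf hg hw₀ continuousOn_const hc hw) measurableSet_Ioc
        fun y hy => mul_le_mul_of_nonneg_right
          (hg_mono (ordConnected_strip.out hc hw (Ioc_subset_Icc_self hy)) hw hy.2)
          (steinPdf_nonneg hc₁ y)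
    _ = g w * ∫ y in Ioc c w, steinPdf g w₀ c₁ y := integral_const_mul _ _

lemma mul_integral_Ioc_le_steinPdf (hc₁ : 0 ≤ c₁) (hg : ContinuousOn g (strip a b))
    (hg_mono : MonotoneOn g (strip a b)) (hw₀ : w₀ ∈ strip a b) {w d : ℝ}
    (hw : w ∈ strip a b) (hd : d ∈ strip a b) (hwd : w ≤ d) :
    g w * ∫ y in Ioc w d, steinPdf g w₀ c₁ y ≤ steinPdf g w₀ c₁ w := by
  calc g w * ∫ y in Ioc w d, steinPdf g w₀ c₁ y
      = ∫ y in Ioc w d, g w * steinPdf g w₀ c₁ y := (integral_const_mul _ _).symm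
    _ ≤ ∫ y in Ioc w d, g y * steinPdf g w₀ c₁ y :=
      setIntegral_mono_on (integrableOn_Ioc_steinPdf hg hw₀ continuousOn_const hw hd)
        (integrableOn_Ioc_steinPdf hg hw₀ hg hw hd) measurableSet_Ioc
        fun y hy => mul_le_mul_of_nonneg_right
          (hg_mono hw (ordConnected_strip.out hw hd (Ioc_subset_Icc_self hy)) hy.1.le)
          (steinPdf_nonneg hc₁ y)
    _ = steinPdf g w₀ c₁ w - steinPdf g w₀ c₁ d := by
      rw [← integral_mul_steinPdf hg hw₀ hw hd, intervalIntegral.integral_of_le hwd]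
    _ ≤ steinPdf g w₀ c₁ w := sub_le_self _ (steinPdf_nonneg hc₁ d)

lemma integrableOn_steinPdf (hnorm : ∫ y in strip a b, steinPdf g w₀ c₁ y = 1) :
    IntegrableOn (steinPdf g w₀ c₁) (strip a b) :=
  Integrable.of_integral_ne_zero (by rw [hnorm]; exact one_ne_zero)

lemma steinCDF_nonneg (hc₁ : 0 ≤ c₁) (w : ℝ) : 0 ≤ steinCDF g a b w₀ c₁ w :=
  setIntegral_nonneg (isOpen_strip.measurableSet.inter measurableSet_Iic)
    fun y _ => steinPdf_nonneg hc₁ y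

lemma steinCDF_mono (hc₁ : 0 ≤ c₁) (hnorm : ∫ y in strip a b, steinPdf g w₀ c₁ y = 1) :
    Monotone (steinCDF g a b w₀ c₁) := fun _ _ huv =>
  setIntegral_mono_set ((integrableOn_steinPdf hnorm).mono_set inter_subset_left)
    (Eventually.of_forall fun y => steinPdf_nonneg hc₁ y)
    (inter_subset_inter_right _ (Iic_subset_Iic.2 huv)).eventuallyLE

lemma setIntegral_strip_inter_Ioi_steinPdf
    (hnorm : ∫ y in strip a b, steinPdf g w₀ c₁ y = 1) (w : ℝ) :
    ∫ y in strip a b ∩ Ioi w, steinPdf g w₀ c₁ y = 1 - steinCDF g a b w₀ c₁ w := by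
  rw [← hnorm, ← integral_inter_add_sdiff measurableSet_Iic (integrableOn_steinPdf hnorm),
    sdiff_eq, compl_Iic, steinCDF, add_sub_cancel_left]

lemma steinCDF_le_one (hc₁ : 0 ≤ c₁) (hnorm : ∫ y in strip a b, steinPdf g w₀ c₁ y = 1)
    (w : ℝ) : steinCDF g a b w₀ c₁ w ≤ 1 := by
  rw [← sub_nonneg, ← setIntegral_strip_inter_Ioi_steinPdf hnorm]
  exact setIntegral_nonneg (isOpen_strip.measurableSet.inter measurableSet_Ioi)
    fun y _ => steinPdf_nonneg hc₁ y

lemma neg_steinPdf_le_mul_steinCDF (hc₁ : 0 ≤ c₁)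
    (hnorm : ∫ y in strip a b, steinPdf g w₀ c₁ y = 1) (hg : ContinuousOn g (strip a b))
    (hg_mono : MonotoneOn g (strip a b)) (hw₀ : w₀ ∈ strip a b) {w : ℝ} (hw : w ∈ strip a b) :
    -steinPdf g w₀ c₁ w ≤ g w * steinCDF g a b w₀ c₁ w := by
  obtain ⟨c, hc, hlim⟩ := exists_tendsto_setIntegral_Ioc_left (integrableOn_steinPdf hnorm) hw
  exact ge_of_tendsto' (hlim.const_mul (g w))
    fun n => neg_steinPdf_le_mul_integral_Ioc hc₁ hg hg_mono hw₀ (hc n).1 hw (hc n).2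

lemma mul_one_sub_steinCDF_le_steinPdf (hc₁ : 0 ≤ c₁)
    (hnorm : ∫ y in strip a b, steinPdf g w₀ c₁ y = 1) (hg : ContinuousOn g (strip a b))
    (hg_mono : MonotoneOn g (strip a b)) (hw₀ : w₀ ∈ strip a b) {w : ℝ} (hw : w ∈ strip a b) :
    g w * (1 - steinCDF g a b w₀ c₁ w) ≤ steinPdf g w₀ c₁ w := by
  obtain ⟨d, hd, hlim⟩ := exists_tendsto_setIntegral_Ioc_right (integrableOn_steinPdf hnorm) hw
  rw [← setIntegral_strip_inter_Ioi_steinPdf hnorm]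
  exact le_of_tendsto' (hlim.const_mul (g w))
    fun n => mul_integral_Ioc_le_steinPdf hc₁ hg hg_mono hw₀ hw (hd n).1 (hd n).2

lemma mul_mul_one_sub_div_mem_Icc {γ p x y : ℝ} (hp : 0 < p) (hx : 0 ≤ x) (hxy : x ≤ y)
    (hy : y ≤ 1) (hlo : -p ≤ γ * x) (hhi : γ * (1 - x) ≤ p) :
    γ * x * (1 - y) / p ∈ Icc (y - 1) y := by
  rw [mem_Icc, le_div_iff₀ hp, div_le_iff₀ hp]
  constructor
  · nlinarith
  · rcases le_or_gt γ 0 with hγ | hγ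
    · nlinarith [mul_nonpos_of_nonpos_of_nonneg hγ (mul_nonneg hx (sub_nonneg.2 hy))]
    · calc γ * x * (1 - y)
          ≤ x * (γ * (1 - x)) := by nlinarith [mul_nonneg (mul_nonneg hγ.le hx) (sub_nonneg.2 hxy)]
        _ ≤ x * p := mul_le_mul_of_nonneg_left hhi hx
        _ ≤ y * p := by nlinarith

theorem steinSol_gMul_bounds_general
    (a b : EReal) (g : ℝ → ℝ) (w₀ c₁ : ℝ)
    (hw₀ : w₀ ∈ strip a b) (hc₁ : 0 < c₁)
    (hnorm : ∫ y in strip a b, steinPdf g w₀ c₁ y = 1)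
    -- condition (A1)
    (hg_mono : MonotoneOn g (strip a b))
    -- condition (A2)
    (hg_diff : ∀ w ∈ strip a b, DifferentiableAt ℝ g w)
    (z : ℝ) :
    ∀ w ∈ strip a b, (steinCDF g a b w₀ c₁ z - 1 ≤ g w * steinSol g a b w₀ c₁ z w ∧ g w * steinSol g a b w₀ c₁ z w ≤ steinCDF g a b w₀ c₁ z) ∧ |g w * steinSol g a b w₀ c₁ z w| ≤ 1 := by
  intro w hw
  have hg : ContinuousOn g (strip a b) := fun y hy =>
    (hg_diff y hy).continuousAt.continuousWithinAt
  set F := steinCDF g a b w₀ c₁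
  have hF0 : ∀ u, 0 ≤ F u := steinCDF_nonneg hc₁.le
  have hF1 : ∀ u, F u ≤ 1 := steinCDF_le_one hc₁.le hnorm
  have hF_mono : Monotone F := steinCDF_mono hc₁.le hnorm
  have hlo := neg_steinPdf_le_mul_steinCDF hc₁.le hnorm hg hg_mono hw₀ hw
  have hhi := mul_one_sub_steinCDF_le_steinPdf hc₁.le hnorm hg hg_mono hw₀ hw
  have hbounds : g w * steinSol g a b w₀ c₁ z w ∈ Icc (F z - 1) (F z) := by
    rw [steinSol]
    split_ifs with hwz
    · rw [← mul_div_assoc, ← mul_assoc]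
      exact mul_mul_one_sub_div_mem_Icc (steinPdf_pos hc₁ w) (hF0 w)
        (hF_mono hwz) (hF1 z) hlo hhi
    -- the branch `w > z` is the branch `w ≤ z` for `-g` and `1 - F`
    · have h := mul_mul_one_sub_div_mem_Icc (γ := -g w) (steinPdf_pos hc₁ w)
        (sub_nonneg.2 (hF1 w)) (sub_le_sub_left (hF_mono (not_le.1 hwz).le) 1)
        (sub_le_self _ (hF0 z)) (by linarith) (by linarith)
      have heq : g w * (F z * (1 - F w) / steinPdf g w₀ c₁ w) =
          -(-g w * (1 - F w) * (1 - (1 - F z)) / steinPdf g w₀ c₁ w) := by ring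
      rw [heq]
      exact ⟨by linarith [h.2], by linarith [h.1]⟩
  exact ⟨hbounds, abs_le.2 ⟨by linarith [hbounds.1, hF0 z], by linarith [hbounds.2, hF1 z]⟩⟩

/-- Lemma 4.1, (4.5): `F(z) - 1 ≤ g(w) f_z(w) ≤ F(z)`, hence `|g f_z| ≤ 1`. -/
theorem steinSol_gMul_bounds
    (a b : EReal) (hab : a < b) (g : ℝ → ℝ) (w₀ c₁ : ℝ)
    (hw₀ : w₀ ∈ strip a b) (hc₁ : 0 < c₁)
    (hnorm : ∫ y in strip a b, steinPdf g w₀ c₁ y = 1)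
    -- condition (A1)
    (hg_mono : MonotoneOn g (strip a b))
    (hg_sign : ∀ w ∈ strip a b, 0 ≤ (w - w₀) * g w)
    -- condition (A2)
    (hg_diff : ∀ w ∈ strip a b, DifferentiableAt ℝ g w)
    (hg'_diff : ∀ w ∈ strip a b, DifferentiableAt ℝ (deriv g) w)
    (hg'_cont : ContinuousOn (deriv g) (strip a b))
    (hg_ineq : ∀ w ∈ strip a b, 0 ≤ 2 * (deriv g w) ^ 2 - g w * deriv (deriv g) w)
    -- condition (A3)
    (hlim_a : Tendsto (fun y => g y * steinPdf g w₀ c₁ y)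
      (Filter.comap (fun x : ℝ => (x : EReal)) (nhdsWithin a (Set.Ioi a))) (nhds 0))
    (hlim_b : Tendsto (fun y => g y * steinPdf g w₀ c₁ y)
      (Filter.comap (fun x : ℝ => (x : EReal)) (nhdsWithin b (Set.Iio b))) (nhds 0))
    (z : ℝ) (hz : z ∈ strip a b) :
    ∀ w ∈ strip a b, (steinCDF g a b w₀ c₁ z - 1 ≤ g w * steinSol g a b w₀ c₁ z w ∧ g w * steinSol g a b w₀ c₁ z w ≤ steinCDF g a b w₀ c₁ z) ∧ |g w * steinSol g a b w₀ c₁ z w| ≤ 1 :=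
  steinSol_gMul_bounds_general a b g w₀ c₁ hw₀ hc₁ hnorm hg_mono hg_diff z
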